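/- The Ricci curvature of a left invariant metric on a 3-dimensional unimodular Lie group is diagonal in any Milnor basis that is orthogonal for the metric: Ric(u,v) = Ric(v,w) = Ric(w,u) = 0. In particular, each Milnor flat is invariant under the Ricci map. -/

import Mathlib

noncomputable section

/-- The Milnor bracket `[u,v] = a•w`, `[v,w] = b•u`, `[w,u] = c•v` on `ℝ³`. -/
def milnorBracket (a b c : ℝ) (x y : Fin 3 → ℝ) : Fin 3 → ℝ :=
  ![b * (x 1 * y 2 - x 2 * y 1), c * (x 2 * y 0 - x 0 * y 2), a * (x 0 * y 1 - x 1 * y 0)]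

/-- The inner product making `u, v, w` orthogonal with `⟨u,u⟩ = x`, `⟨v,v⟩ = y`, `⟨w,w⟩ = z`. -/
def gMet (x y z : ℝ) (p q : Fin 3 → ℝ) : ℝ :=
  x * p 0 * q 0 + y * p 1 * q 1 + z * p 2 * q 2

/-- The orthonormal basis `u/√x, v/√y, w/√z`. -/
def onb (x y z : ℝ) : Fin 3 → (Fin 3 → ℝ) :=
  ![(Real.sqrt x)⁻¹ • (Pi.single 0 1 : Fin 3 → ℝ),
    (Real.sqrt y)⁻¹ • (Pi.single 1 1 : Fin 3 → ℝ),
    (Real.sqrt z)⁻¹ • (Pi.single 2 1 : Fin 3 → ℝ)]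

/-- The Killing form `B(X,Y) = tr(ad_X ∘ ad_Y)`. -/
def killingF (a b c : ℝ) (X Y : Fin 3 → ℝ) : ℝ :=
  ∑ i : Fin 3, milnorBracket a b c X (milnorBracket a b c Y (Pi.single i 1)) i

/-- The Ricci curvature as a bilinear form,
`Ric(X,Y) = −½B(X,Y) − ½Σᵢ⟨[X,eᵢ],[Y,eᵢ]⟩ + ¼Σᵢⱼ⟨[eᵢ,eⱼ],X⟩⟨[eᵢ,eⱼ],Y⟩`. -/
def ricB (a b c x y z : ℝ) (X Y : Fin 3 → ℝ) : ℝ :=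
  -(1/2) * killingF a b c X Y
    - (1/2) * ∑ i : Fin 3,
        gMet x y z (milnorBracket a b c X (onb x y z i)) (milnorBracket a b c Y (onb x y z i))
    + (1/4) * ∑ i : Fin 3, ∑ j : Fin 3,
        (gMet x y z (milnorBracket a b c (onb x y z i) (onb x y z j)) X)
          * (gMet x y z (milnorBracket a b c (onb x y z i) (onb x y z j)) Y)

/-! Each of the three terms of the Ricci formula is separately diagonal in the Milnor basis.
The Killing form is `diag(-2ca, -2ab, -2bc)`. The bracket of two basis vectors points along the
third basis direction, so for `k ≠ l` the vectors `[e_k, eᵢ]` and `[e_l, eᵢ]` are orthogonal, and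
`⟨[eᵢ, eⱼ], X⟩` sees only one coordinate of `X`. -/

section DiagonalForm

variable {ι : Type*} [Fintype ι]

def IsDiagonalForm (B : (ι → ℝ) → (ι → ℝ) → ℝ) : Prop :=
  ∃ d : ι → ℝ, ∀ X Y, B X Y = ∑ i, d i * X i * Y i

namespace IsDiagonalForm

variable {B B' : (ι → ℝ) → (ι → ℝ) → ℝ}

theorem add (hB : IsDiagonalForm B) (hB' : IsDiagonalForm B') :
    IsDiagonalForm fun X Y => B X Y + B' X Y := by
  obtain ⟨d, hd⟩ := hB
  obtain ⟨d', hd'⟩ := hB'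
  refine ⟨d + d', fun X Y => ?_⟩
  dsimp only
  rw [hd, hd', ← Finset.sum_add_distrib]
  exact Finset.sum_congr rfl fun i _ => by rw [Pi.add_apply]; ring

theorem const_mul (r : ℝ) (hB : IsDiagonalForm B) : IsDiagonalForm fun X Y => r * B X Y := by
  obtain ⟨d, hd⟩ := hB
  exact ⟨r • d, fun X Y => by simp only [hd, Finset.mul_sum, Pi.smul_apply, smul_eq_mul, mul_assoc]⟩

theorem sub (hB : IsDiagonalForm B) (hB' : IsDiagonalForm B') :
    IsDiagonalForm fun X Y => B X Y - B' X Y := by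
  simpa only [neg_one_mul, ← sub_eq_add_neg] using hB.add (hB'.const_mul (-1))

theorem sum {κ : Type*} [Fintype κ] {B : κ → (ι → ℝ) → (ι → ℝ) → ℝ}
    (hB : ∀ k, IsDiagonalForm (B k)) : IsDiagonalForm fun X Y => ∑ k, B k X Y := by
  choose d hd using hB
  refine ⟨∑ k, d k, fun X Y => ?_⟩
  simp only [hd, Finset.sum_apply, Finset.sum_mul]
  exact Finset.sum_comm

theorem apply_single_single_of_ne [DecidableEq ι] (hB : IsDiagonalForm B) {i j : ι}
    (hij : i ≠ j) : B (Pi.single i 1) (Pi.single j 1) = 0 := by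
  obtain ⟨d, hd⟩ := hB
  refine (hd _ _).trans (Finset.sum_eq_zero fun k _ => ?_)
  by_cases hk : k = i
  · simp [hk, hij.symm]
  · simp [hk]

end IsDiagonalForm

end DiagonalForm

theorem killingF_isDiagonalForm (a b c : ℝ) : IsDiagonalForm (killingF a b c) :=
  ⟨![-2 * c * a, -2 * a * b, -2 * b * c], fun X Y => by
    simp only [killingF, milnorBracket, Fin.sum_univ_three, Pi.single_apply, Matrix.cons_val_zero,
      Matrix.cons_val_one, Matrix.cons_val_two, Fin.reduceEq, if_true, if_false, Matrix.head_cons,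
      Matrix.tail_cons]; ring⟩

theorem onb_eq_smul_single (x y z : ℝ) (i : Fin 3) :
    onb x y z i = (Real.sqrt (![x, y, z] i))⁻¹ • Pi.single i 1 := by
  fin_cases i <;> rfl

theorem isDiagonalForm_gMet_milnorBracket_smul_single (a b c x y z t : ℝ) (k : Fin 3) :
    IsDiagonalForm fun X Y => gMet x y z (milnorBracket a b c X (t • Pi.single k 1))
      (milnorBracket a b c Y (t • Pi.single k 1)) := by
  refine ⟨fun i => t ^ 2 * ![![0, z * a ^ 2, y * c ^ 2], ![z * a ^ 2, 0, x * b ^ 2],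
    ![y * c ^ 2, x * b ^ 2, 0]] k i, fun X Y => ?_⟩
  fin_cases k <;>
    simp only [gMet, milnorBracket, Fin.sum_univ_three, Pi.smul_apply, smul_eq_mul,
      Pi.single_apply, Fin.zero_eta, Fin.mk_one, Fin.reduceFinMk, Matrix.cons_val_zero,
      Matrix.cons_val_one, Matrix.cons_val_two, Fin.reduceEq, if_true, if_false, Matrix.head_cons,
      Matrix.tail_cons] <;>
    ring

theorem gMet_smul_single (x y z r : ℝ) (k : Fin 3) (X : Fin 3 → ℝ) :
    gMet x y z (r • Pi.single k 1) X = ![x, y, z] k * r * X k := by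
  fin_cases k <;> simp [gMet]

theorem isDiagonalForm_gMet_mul_gMet_smul_single (x y z r : ℝ) (k : Fin 3) :
    IsDiagonalForm fun X Y =>
      gMet x y z (r • Pi.single k 1) X * gMet x y z (r • Pi.single k 1) Y := by
  refine ⟨Pi.single k ((![x, y, z] k * r) ^ 2), fun X Y => ?_⟩
  dsimp only
  rw [Finset.sum_eq_single k (fun i _ hi => by simp [hi]) (by simp), gMet_smul_single,
    gMet_smul_single, Pi.single_eq_same]
  ring

theorem milnorBracket_smul_single_smul_single (a b c s t : ℝ) (i j : Fin 3) :
    ∃ k, milnorBracket a b c (s • Pi.single i 1) (t • Pi.single j 1) =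
      milnorBracket a b c (s • Pi.single i 1) (t • Pi.single j 1) k • Pi.single k 1 := by
  fin_cases i <;> fin_cases j <;>
    first
    | (refine ⟨0, ?_⟩; ext m; fin_cases m <;> simp [milnorBracket] <;> done)
    | (refine ⟨1, ?_⟩; ext m; fin_cases m <;> simp [milnorBracket] <;> done)
    | (refine ⟨2, ?_⟩; ext m; fin_cases m <;> simp [milnorBracket])

theorem ricB_isDiagonalForm (a b c x y z : ℝ) : IsDiagonalForm (ricB a b c x y z) := by
  refine ((killingF_isDiagonalForm a b c).const_mul _).sub (IsDiagonalForm.const_mul _ ?_)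
    |>.add (IsDiagonalForm.const_mul _ ?_)
  · refine IsDiagonalForm.sum fun i => ?_
    rw [onb_eq_smul_single]
    exact isDiagonalForm_gMet_milnorBracket_smul_single ..
  · refine IsDiagonalForm.sum fun i => IsDiagonalForm.sum fun j => ?_
    obtain ⟨k, hk⟩ := milnorBracket_smul_single_smul_single a b c
      (Real.sqrt (![x, y, z] i))⁻¹ (Real.sqrt (![x, y, z] j))⁻¹ i j
    rw [onb_eq_smul_single, onb_eq_smul_single, hk]
    exact isDiagonalForm_gMet_mul_gMet_smul_single ..

theorem ric_diagonal_in_milnor_basis_general (a b c x y z : ℝ) :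
    ricB a b c x y z (Pi.single 0 1) (Pi.single 1 1) = 0 ∧
    ricB a b c x y z (Pi.single 1 1) (Pi.single 2 1) = 0 ∧
    ricB a b c x y z (Pi.single 2 1) (Pi.single 0 1) = 0 :=
  have hRic := ricB_isDiagonalForm a b c x y z
  ⟨hRic.apply_single_single_of_ne (by decide), hRic.apply_single_single_of_ne (by decide),
    hRic.apply_single_single_of_ne (by decide)⟩

/-- The Ricci curvature of a left invariant metric on a 3-dimensional unimodular Lie group is
diagonal in any Milnor basis orthogonal for the metric:
`Ric(u,v) = Ric(v,w) = Ric(w,u) = 0` (so each Milnor flat is invariant under the Ricci map). -/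
theorem ric_diagonal_in_milnor_basis (a b c x y z : ℝ)
    (hx : 0 < x) (hy : 0 < y) (hz : 0 < z) :
    ricB a b c x y z (Pi.single 0 1) (Pi.single 1 1) = 0 ∧
    ricB a b c x y z (Pi.single 1 1) (Pi.single 2 1) = 0 ∧
    ricB a b c x y z (Pi.single 2 1) (Pi.single 0 1) = 0 :=
  ric_diagonal_in_milnor_basis_general a b c x y z

end
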